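/- Let n ≥ r ≥ 2, 0 < η ≤ (r+1)^{-1}, C > 0, 1 < p ≤ ∞ with conjugate exponent q. Let H be an η-nonatomic hypergraph system, e an edge with |e| = r, and f a nonnegative integrable function measurable with respect to the coordinates in e. If f is (C,η,p)-regular, then for every A ∈ S_{∂e} we have (∫_A f dμ)^q ≤ C^q (μ(A) + (r+3)η). -/

import Mathlib

open MeasureTheory ENNReal

/-- `A ⊆ ∏ i, X i` depends only on the coordinates in `e`. -/
def CoordDependsOn {n : ℕ} {X : Fin n → Type*} (e : Finset (Fin n)) (A : Set (∀ i, X i)) : Prop :=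
  ∀ x y : ∀ i, X i, (∀ i ∈ e, x i = y i) → (x ∈ A ↔ y ∈ A)

/-- A function on `∏ i, X i` depending only on the coordinates in `e`. -/
def DependsOnF {n : ℕ} {X : Fin n → Type*} (e : Finset (Fin n)) (f : (∀ i, X i) → ℝ) : Prop :=
  ∀ x y : ∀ i, X i, (∀ i ∈ e, x i = y i) → f x = f y

/-- `A` belongs to `B_e`: it is measurable and depends only on the coordinates in `e`. -/
def CubeSet {n : ℕ} {X : Fin n → Type*} [∀ i, MeasurableSpace (X i)]
    (e : Finset (Fin n)) (A : Set (∀ i, X i)) : Prop :=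
  MeasurableSet A ∧ CoordDependsOn e A

/-- The boundary `∂e` of `e`: subsets of `e` of size `|e| - 1`. -/
def bdry {n : ℕ} (e : Finset (Fin n)) : Finset (Finset (Fin n)) :=
  e.powerset.filter (fun e' => e'.card + 1 = e.card)

/-- `A ∈ S_{∂e}`: `A` is an intersection `⋂_{e' ∈ ∂e} A_{e'}` with `A_{e'} ∈ B_{e'}`. -/
def SPartial {n : ℕ} {X : Fin n → Type*} [∀ i, MeasurableSpace (X i)]
    (e : Finset (Fin n)) (A : Set (∀ i, X i)) : Prop :=
  ∃ F : Finset (Fin n) → Set (∀ i, X i),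
    (∀ e' ∈ bdry e, CubeSet e' (F e')) ∧ A = ⋂ e' ∈ bdry e, F e'

/-- Every atom of `ν` has measure at most `η`. -/
def AtomsLE {Y : Type*} [MeasurableSpace Y] (ν : Measure Y) (η : ℝ) : Prop :=
  ∀ A : Set Y, MeasurableSet A → 0 < ν A →
    (∀ B : Set Y, B ⊆ A → MeasurableSet B → ν B = 0 ∨ ν B = ν A) →
    (ν A).toReal ≤ η

/-- The conditional expectation of `f` with respect to the σ-algebra generated by the
finite partition `P` (explicit formula: average of `f` on each cell). -/
noncomputable def partCE {Y : Type*} [MeasurableSpace Y] (ν : Measure Y)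
    (P : Finset (Set Y)) (f : Y → ℝ) : Y → ℝ :=
  fun x => ∑ s ∈ P, Set.indicator s (fun _ => (∫ y in s, f y ∂ν) / (ν s).toReal) x

/-- `f` is `(C, η, p)`-regular: for every partition `P ⊆ S_{∂e}` of the whole space with
all cells of measure at least `η`, `‖E(f | σ(P))‖_{L_p} ≤ C`. -/
def LpRegular {n : ℕ} {X : Fin n → Type*} [∀ i, MeasurableSpace (X i)]
    (μ : Measure (∀ i, X i)) (e : Finset (Fin n)) (C η : ℝ) (p : ℝ≥0∞)
    (f : (∀ i, X i) → ℝ) : Prop :=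
  ∀ P : Finset (Set (∀ i, X i)), (∀ s ∈ P, SPartial e s) →
    (P : Set (Set (∀ i, X i))).PairwiseDisjoint id →
    ⋃₀ (P : Set (Set (∀ i, X i))) = Set.univ →
    (∀ s ∈ P, η ≤ (μ s).toReal) →
    eLpNorm (partCE μ P f) p μ ≤ ENNReal.ofReal C

/-!
Refine the trivial partition greedily along `A = ⋂ A_{e'}`: the current cell `D ⊇ A` is split
along `A_{e'}` whenever both halves have measure at least `η`. Afterwards either every `D \ A_{e'}`
has measure `< η`, so `μ D ≤ μ A + r η`, or some `D ∩ A_{e'}` has measure `< η`; in the latter case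
`D` is cut along `A_{e'} ∪ {x | x i ∈ U}` for a coordinate `i ∈ e'`, where nonatomicity of `X i`
yields a `U` making the piece that contains `A` of measure between `η` and `3 η`. This gives a
partition `P ⊆ S_{∂e}` with cells of measure `≥ η` and a cell `B ⊇ A` with
`μ B ≤ μ A + (r + 3) η`. On `B` the conditional expectation is the average `a` of `f`, so
`a μ(B)^{1/p} ≤ ‖E(f | P)‖_p ≤ C`, whence `∫_A f ≤ ∫_B f = a μ B ≤ C μ(B)^{1/q}`.
-/

open Set

section CountableFamilies

variable {Y : Type*} [MeasurableSpace Y] {ν : Measure Y}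

lemma Set.PairwiseDisjoint.countable_of_measure_ne_zero [SFinite ν] {𝓕 : Set (Set Y)}
    (hdisj : 𝓕.PairwiseDisjoint id) (hmeas : ∀ s ∈ 𝓕, MeasurableSet s) (h0 : ∀ s ∈ 𝓕, ν s ≠ 0) :
    𝓕.Countable := by
  have h := Measure.countable_meas_pos_of_disjoint_iUnion (μ := ν) (As := ((↑) : 𝓕 → Set Y))
    (fun s => hmeas s s.2) fun s s' hss' => hdisj s.2 s'.2 (Subtype.coe_ne_coe.2 hss')
  have hall : {s : 𝓕 | 0 < ν s} = univ := eq_univ_of_forall fun s => pos_iff_ne_zero.2 (h0 s s.2)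
  rwa [hall, countable_univ_iff, countable_coe_iff] at h

lemma measure_sUnion_le_of_forall_finite {𝓕 : Set (Set Y)} (hcount : 𝓕.Countable) {t : ℝ≥0∞}
    (h : ∀ 𝓖 ⊆ 𝓕, 𝓖.Finite → ν (⋃₀ 𝓖) ≤ t) : ν (⋃₀ 𝓕) ≤ t := by
  have h𝓕 : ⋃₀ 𝓕 = ⋃ 𝓖 ∈ {𝓖 | 𝓖.Finite ∧ 𝓖 ⊆ 𝓕}, ⋃₀ 𝓖 := by
    refine Subset.antisymm (fun x ⟨s, hs, hx⟩ => ?_) (iUnion₂_subset fun 𝓖 h𝓖 => sUnion_mono h𝓖.2)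
    exact mem_biUnion ⟨finite_singleton s, singleton_subset_iff.2 hs⟩ ⟨s, rfl, hx⟩
  rw [h𝓕, measure_biUnion_eq_iSup (countable_ofPred_finite_subset hcount)]
  · exact iSup₂_le fun 𝓖 h𝓖 => h 𝓖 h𝓖.2 h𝓖.1
  · exact fun 𝓖 h𝓖 𝓖' h𝓖' => ⟨𝓖 ∪ 𝓖', ⟨h𝓖.1.union h𝓖'.1, union_subset h𝓖.2 h𝓖'.2⟩,
      sUnion_mono subset_union_left, sUnion_mono subset_union_right⟩

end CountableFamilies

namespace AtomsLE

variable {Y : Type*} [MeasurableSpace Y] {ν : Measure Y} {η : ℝ}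

lemma measure_le_ofReal (hat : AtomsLE ν η) {A : Set Y} (hA : MeasurableSet A) (hA0 : 0 < ν A)
    (hatom : ∀ B ⊆ A, MeasurableSet B → ν B = 0 ∨ ν B = ν A) (hAfin : ν A ≠ ∞) :
    ν A ≤ ENNReal.ofReal η := by
  rw [← ENNReal.ofReal_toReal hAfin]
  exact ENNReal.ofReal_le_ofReal (hat A hA hA0 hatom)

theorem exists_subset_measure_pos_le [IsFiniteMeasure ν] (hη : 0 < η) (hat : AtomsLE ν η)
    {T : Set Y} (hT : MeasurableSet T) (hT0 : 0 < ν T) :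
    ∃ U ⊆ T, MeasurableSet U ∧ 0 < ν U ∧ ν U ≤ ENNReal.ofReal η := by
  by_contra! hbig
  set S := {x | ∃ U ⊆ T, MeasurableSet U ∧ 0 < ν U ∧ ν U = x}
  have hm_le : ∀ U ⊆ T, MeasurableSet U → 0 < ν U → sInf S ≤ ν U :=
    fun U hU hUm hU0 => sInf_le ⟨U, hU, hUm, hU0, rfl⟩
  have hm0 : 0 < sInf S := (ENNReal.ofReal_pos.2 hη).trans_le <| le_sInf <| by
    rintro _ ⟨U, hU, hUm, hU0, rfl⟩
    exact (hbig U hU hUm hU0).le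
  have hmtop : sInf S ≠ ∞ := ne_top_of_le_ne_top (measure_ne_top ν T) (hm_le T le_rfl hT hT0)
  obtain ⟨_, ⟨U, hUT, hUm, hU0, rfl⟩, hU⟩ :=
    exists_lt_of_csInf_lt (s := S) ⟨_, T, le_rfl, hT, hT0, rfl⟩ (ENNReal.lt_add_right hmtop hm0.ne')
  -- a set of measure `< 2 inf S` cannot be split into two non-null parts
  have hatom : ∀ B ⊆ U, MeasurableSet B → ν B = 0 ∨ ν B = ν U := by
    intro B hBU hBm
    by_contra! hB
    have hsplit : ν B + ν (U \ B) = ν U := by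
      simpa only [inter_eq_right.2 hBU] using measure_inter_add_sdiff U hBm
    have hdiff0 : ν (U \ B) ≠ 0 := fun h => hB.2 (by rw [← hsplit, h, add_zero])
    refine hU.not_ge (hsplit ▸ add_le_add ?_ ?_)
    · exact hm_le B (hBU.trans hUT) hBm (pos_iff_ne_zero.2 hB.1)
    · exact hm_le _ (sdiff_subset.trans hUT) (hUm.diff hBm) (pos_iff_ne_zero.2 hdiff0)
  exact (hbig U hUT hUm hU0).not_ge (hat.measure_le_ofReal hUm hU0 hatom (measure_ne_top ν U))

theorem mono {μ₀ : Measure Y} [IsFiniteMeasure μ₀] (hat : AtomsLE μ₀ η) (hle : ν ≤ μ₀) :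
    AtomsLE ν η := by
  intro T hT hT0 hatom
  have := isFiniteMeasure_of_le μ₀ hle
  have hac : ν ≪ μ₀ := Measure.absolutelyContinuous_of_le hle
  have hg : Measurable (ν.rnDeriv μ₀) := Measure.measurable_rnDeriv ν μ₀
  have hN : MeasurableSet {x | ν.rnDeriv μ₀ x = 0} := hg (measurableSet_singleton 0)
  -- where the density is positive, `ν`-null sets are `μ₀`-null
  have hnull : ∀ B, MeasurableSet B → (∀ x ∈ B, ν.rnDeriv μ₀ x ≠ 0) → ν B = 0 → μ₀ B = 0 := by
    intro B hB hgB hνB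
    rw [← Measure.setLIntegral_rnDeriv hac, setLIntegral_eq_zero_iff hB hg] at hνB
    rw [measure_eq_zero_iff_ae_notMem]
    filter_upwards [hνB] with x hx hxB using hgB x hxB (hx hxB)
  have hνN : ν {x | ν.rnDeriv μ₀ x = 0} = 0 := by
    rw [← Measure.setLIntegral_rnDeriv hac]
    exact (setLIntegral_eq_zero_iff hN hg).2 (ae_of_all _ fun x hx => hx)
  set T' := T \ {x | ν.rnDeriv μ₀ x = 0}
  have hT' : MeasurableSet T' := hT.diff hN
  have hνT' : ν T' = ν T := measure_sdiff_null hνN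
  have hatom' : ∀ B ⊆ T', MeasurableSet B → μ₀ B = 0 ∨ μ₀ B = μ₀ T' := by
    intro B hB hBm
    rcases hatom B (hB.trans sdiff_subset) hBm with h | h
    · exact Or.inl (hnull B hBm (fun x hx => (hB hx).2) h)
    · refine Or.inr ?_
      have hrest : μ₀ (T' \ B) = 0 := by
        refine hnull _ (hT'.diff hBm) (fun x hx => hx.1.2) ?_
        rw [measure_sdiff hB hBm.nullMeasurableSet (measure_ne_top ν B), h, ← hνT',
          tsub_self]
      rw [← measure_inter_add_sdiff T' hBm, hrest, add_zero, inter_eq_right.2 hB]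
  have hT'le : ν T' ≤ μ₀ T' := Measure.le_iff'.1 hle T'
  calc (ν T).toReal = (ν T').toReal := by rw [hνT']
    _ ≤ (μ₀ T').toReal := ENNReal.toReal_mono (measure_ne_top _ _) hT'le
    _ ≤ η := hat T' hT' (hT0.trans_le (hνT' ▸ hT'le)) hatom'

theorem exists_measure_mem_Icc [IsFiniteMeasure ν] (hη : 0 < η) (hat : AtomsLE ν η)
    {t : ℝ≥0∞} (ht : t ≤ ν univ) :
    ∃ U, MeasurableSet U ∧ t ≤ ν U ∧ ν U ≤ t + ENNReal.ofReal η := by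
  let 𝒜 : Set (Set (Set Y)) := {𝓕 | 𝓕.PairwiseDisjoint id ∧
    (∀ s ∈ 𝓕, MeasurableSet s ∧ ν s ≠ 0) ∧ ∀ 𝓖 ⊆ 𝓕, 𝓖.Finite → ν (⋃₀ 𝓖) ≤ t}
  obtain ⟨𝓕, ⟨hdisj, hmeas, hfin⟩, hmax⟩ : ∃ 𝓕, Maximal (· ∈ 𝒜) 𝓕 := by
    refine zorn_subset 𝒜 fun c hc𝒜 hc => ⟨⋃₀ c, ⟨?_, ?_, ?_⟩, fun _ => subset_sUnion_of_mem⟩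
    · exact (pairwiseDisjoint_sUnion hc.directedOn).2 fun 𝓕 h𝓕 => (hc𝒜 h𝓕).1
    · rintro s ⟨𝓕, h𝓕, hs⟩
      exact (hc𝒜 h𝓕).2.1 s hs
    · intro 𝓖 h𝓖 h𝓖fin
      rcases 𝓖.eq_empty_or_nonempty with rfl | ⟨s, hs⟩
      · simp
      obtain ⟨𝓕, h𝓕, h𝓖𝓕⟩ := hc.directedOn.exists_mem_subset_of_finite_of_subset_sUnion
        (Nonempty.of_sUnion ⟨s, h𝓖 hs⟩) h𝓖fin h𝓖
      exact (hc𝒜 h𝓕).2.2 𝓖 h𝓖𝓕 h𝓖fin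
  have hcount := hdisj.countable_of_measure_ne_zero (fun s hs => (hmeas s hs).1)
    fun s hs => (hmeas s hs).2
  set U := ⋃₀ 𝓕
  have hU : MeasurableSet U := MeasurableSet.sUnion hcount fun s hs => (hmeas s hs).1
  have hUt : ν U ≤ t := measure_sUnion_le_of_forall_finite hcount hfin
  by_cases htU : t ≤ ν U
  · exact ⟨U, hU, htU, hUt.trans le_self_add⟩
  have hUc : 0 < ν Uᶜ := by
    refine pos_iff_ne_zero.2 fun h => htU (ht.trans ?_)
    rw [← union_compl_self U]
    exact (measure_union_le U Uᶜ).trans (by rw [h, add_zero])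
  obtain ⟨W, hWU, hW, hW0, hWη⟩ := hat.exists_subset_measure_pos_le hη hU.compl hUc
  have hUW : ν (U ∪ W) = ν U + ν W :=
    measure_union (subset_compl_iff_disjoint_right.1 hWU).symm hW
  refine ⟨U ∪ W, hU.union hW, ?_, hUW ▸ add_le_add hUt hWη⟩
  -- otherwise `W` could be added to the maximal family
  by_contra! hlt
  have hW𝓕 : W ∈ 𝓕 := by
    refine hmax ⟨?_, ?_, fun 𝓖 h𝓖 _ => ?_⟩ (subset_insert W 𝓕) (mem_insert W 𝓕)
    · exact hdisj.insert fun s hs _ =>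
        (subset_compl_iff_disjoint_right.1 hWU).mono_right (subset_sUnion_of_mem hs)
    · exact forall_mem_insert.2 ⟨⟨hW, hW0.ne'⟩, hmeas⟩
    · refine (measure_mono ((sUnion_mono h𝓖).trans ?_)).trans hlt.le
      rw [sUnion_insert, union_comm]
  have hWe : W = ∅ := subset_empty_iff.1 fun x hx => hWU hx (subset_sUnion_of_mem hW𝓕 hx)
  exact hW0.ne' (hWe ▸ measure_empty)

end AtomsLE

lemma pos_of_one_div_add_one_div_ofReal_eq_one {p : ℝ≥0∞} {q : ℝ}
    (hpq : 1 / p + 1 / ENNReal.ofReal q = 1) : 0 < q := by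
  by_contra! hq
  simp [ENNReal.ofReal_eq_zero.2 hq] at hpq

lemma one_div_toReal_add_one_div_eq_one {p : ℝ≥0∞} {q : ℝ}
    (hpq : 1 / p + 1 / ENNReal.ofReal q = 1) : 1 / p.toReal + 1 / q = 1 := by
  have hp : 1 / p ≠ ∞ := ne_top_of_le_ne_top ENNReal.one_ne_top (le_self_add.trans_eq hpq)
  have hq : 1 / ENNReal.ofReal q ≠ ∞ :=
    ne_top_of_le_ne_top ENNReal.one_ne_top (le_add_self.trans_eq hpq)
  have := congrArg ENNReal.toReal hpq
  rwa [ENNReal.toReal_add hp hq, ENNReal.toReal_div, ENNReal.toReal_div, ENNReal.toReal_one,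
    ENNReal.toReal_ofReal (pos_of_one_div_add_one_div_ofReal_eq_one hpq).le] at this

section PartitionAverage

variable {Y : Type*} [MeasurableSpace Y] {ν : Measure Y} {P : Finset (Set Y)} {f : Y → ℝ}

lemma indicator_le_partCE (hf : 0 ≤ f) {B : Set Y} (hB : B ∈ P) :
    B.indicator (fun _ => (∫ y in B, f y ∂ν) / (ν B).toReal) ≤ partCE ν P f := fun x =>
  Finset.single_le_sum (f := fun s => s.indicator (fun _ => (∫ y in s, f y ∂ν) / (ν s).toReal) x)
    (fun _ _ => indicator_nonneg (fun _ _ => div_nonneg (integral_nonneg hf) toReal_nonneg) x) hB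

theorem setIntegral_le_mul_rpow_of_eLpNorm_partCE_le [IsFiniteMeasure ν] (hf : 0 ≤ f)
    {B : Set Y} (hB : B ∈ P) (hBm : MeasurableSet B) (hB0 : ν B ≠ 0)
    {p : ℝ≥0∞} {q : ℝ} (hpq : 1 / p + 1 / ENNReal.ofReal q = 1) {C : ℝ} (hC : 0 ≤ C)
    (hle : eLpNorm (partCE ν P f) p ν ≤ ENNReal.ofReal C) :
    ∫ x in B, f x ∂ν ≤ C * ν.real B ^ (1 / q) := by
  set a := (∫ y in B, f y ∂ν) / ν.real B
  have hm : 0 < ν.real B := ENNReal.toReal_pos hB0 (measure_ne_top ν B)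
  have ha : 0 ≤ a := div_nonneg (integral_nonneg hf) hm.le
  have hp0 : p ≠ 0 := by
    rintro rfl
    simp at hpq
  have hind : eLpNorm (B.indicator fun _ => a) p ν ≤ ENNReal.ofReal C := by
    refine (eLpNorm_mono_real fun x => ?_).trans hle
    rw [Real.norm_of_nonneg (indicator_nonneg (fun _ _ => ha) x)]
    exact indicator_le_partCE hf hB x
  rw [eLpNorm_indicator_const' hBm hB0 hp0] at hind
  have haC : a * ν.real B ^ (1 / p.toReal) ≤ C := by
    have := ENNReal.toReal_mono ENNReal.ofReal_ne_top hind
    rwa [ENNReal.toReal_mul, toReal_enorm, Real.norm_of_nonneg ha, ENNReal.toReal_ofReal hC,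
      ← ENNReal.toReal_rpow] at this
  calc ∫ x in B, f x ∂ν = a * ν.real B ^ (1 / p.toReal) * ν.real B ^ (1 / q) := by
        rw [mul_assoc, ← Real.rpow_add hm, one_div_toReal_add_one_div_eq_one hpq, Real.rpow_one,
          div_mul_cancel₀ _ hm.ne']
    _ ≤ C * ν.real B ^ (1 / q) := by gcongr

theorem rpow_setIntegral_le_of_eLpNorm_partCE_le [IsFiniteMeasure ν] (hf : 0 ≤ f)
    (hfint : Integrable f ν) {B : Set Y} (hB : B ∈ P) (hBm : MeasurableSet B) (hB0 : ν B ≠ 0)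
    {A : Set Y} (hAB : A ⊆ B) {p : ℝ≥0∞} {q : ℝ} (hpq : 1 / p + 1 / ENNReal.ofReal q = 1)
    {C : ℝ} (hC : 0 ≤ C) (hle : eLpNorm (partCE ν P f) p ν ≤ ENNReal.ofReal C) :
    (∫ x in A, f x ∂ν) ^ q ≤ C ^ q * ν.real B := by
  have hq := pos_of_one_div_add_one_div_ofReal_eq_one hpq
  have hAB' : ∫ x in A, f x ∂ν ≤ ∫ x in B, f x ∂ν :=
    setIntegral_mono_set hfint.integrableOn (ae_of_all _ hf) hAB.eventuallyLE
  calc (∫ x in A, f x ∂ν) ^ q ≤ (C * ν.real B ^ (1 / q)) ^ q := by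
        refine Real.rpow_le_rpow (integral_nonneg hf) (hAB'.trans ?_) hq.le
        exact setIntegral_le_mul_rpow_of_eLpNorm_partCE_le hf hB hBm hB0 hpq hC hle
    _ = C ^ q * ν.real B := by
        rw [Real.mul_rpow hC (by positivity), ← Real.rpow_mul measureReal_nonneg,
          one_div_mul_cancel hq.ne', Real.rpow_one]

end PartitionAverage

structure IsThickPartition {Ω : Type*} [MeasurableSpace Ω] (μ : Measure Ω) (𝒮 : Set (Set Ω))
    (η : ℝ) (P : Finset (Set Ω)) : Prop where
  mem : ∀ s ∈ P, s ∈ 𝒮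
  pairwiseDisjoint : (P : Set (Set Ω)).PairwiseDisjoint id
  sUnion_eq_univ : ⋃₀ (P : Set (Set Ω)) = univ
  le_measureReal : ∀ s ∈ P, η ≤ μ.real s

namespace IsThickPartition

variable {Ω : Type*} [MeasurableSpace Ω] {μ : Measure Ω} {𝒮 : Set (Set Ω)} {η : ℝ}
  {P : Finset (Set Ω)}

lemma singleton_univ (huniv : univ ∈ 𝒮) (hη : η ≤ μ.real univ) :
    IsThickPartition μ 𝒮 η {univ} where
  mem := by simpa using huniv
  pairwiseDisjoint := by simp
  sUnion_eq_univ := by simp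
  le_measureReal := by simpa using hη

lemma measure_ne_zero (hP : IsThickPartition μ 𝒮 η P) (hη : 0 < η) {s : Set Ω} (hs : s ∈ P) :
    μ s ≠ 0 := fun h => by
  have := hP.le_measureReal s hs
  rw [measureReal_def, h, ENNReal.toReal_zero] at this
  linarith

lemma exists_split (hP : IsThickPartition μ 𝒮 η P) {D : Set Ω} (hD : D ∈ P) {Z : Set Ω}
    (hDZ : D ∩ Z ∈ 𝒮) (hDZ' : D \ Z ∈ 𝒮) (hηDZ : η ≤ μ.real (D ∩ Z))
    (hηDZ' : η ≤ μ.real (D \ Z)) :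
    ∃ P', IsThickPartition μ 𝒮 η P' ∧ D ∩ Z ∈ P' := by
  classical
  have hdisj : ∀ s ∈ (P : Set (Set Ω)) \ {D}, Disjoint D s := fun s hs =>
    hP.pairwiseDisjoint hD hs.1 (Ne.symm hs.2)
  refine ⟨insert (D ∩ Z) (insert (D \ Z) (P.erase D)), ⟨?_, ?_, ?_, ?_⟩, Finset.mem_insert_self _ _⟩
  · simp only [Finset.mem_insert]
    rintro s (rfl | rfl | hs)
    exacts [hDZ, hDZ', hP.mem s (Finset.mem_of_mem_erase hs)]
  · simp only [Finset.coe_insert, Finset.coe_erase]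
    refine ((hP.pairwiseDisjoint.subset sdiff_subset).insert fun s hs _ => ?_).insert ?_
    · exact (hdisj s hs).mono_left sdiff_subset
    · rintro s (rfl | hs) _
      · exact disjoint_sdiff_inter.symm
      · exact (hdisj s hs).mono_left inter_subset_left
  · refine eq_univ_of_forall fun x => ?_
    obtain ⟨s, hs, hx⟩ := hP.sUnion_eq_univ ▸ mem_univ x
    by_cases hsD : s = D
    · subst hsD
      by_cases hxZ : x ∈ Z
      exacts [⟨_, Finset.mem_insert_self _ _, hx, hxZ⟩,
        ⟨_, Finset.mem_insert_of_mem (Finset.mem_insert_self _ _), hx, hxZ⟩]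
    · exact ⟨s, by simp [hs, hsD], hx⟩
  · simp only [Finset.mem_insert]
    rintro s (rfl | rfl | hs)
    exacts [hηDZ, hηDZ', hP.le_measureReal s (Finset.mem_of_mem_erase hs)]

end IsThickPartition

theorem exists_isThickPartition_unsplittable_cell {Ω : Type*} [MeasurableSpace Ω] {μ : Measure Ω}
    [IsFiniteMeasure μ] {𝒮 : Set (Set Ω)} (h𝒮 : ∀ s ∈ 𝒮, ∀ t ∈ 𝒮, s ∩ t ∈ 𝒮) (huniv : univ ∈ 𝒮)
    {η : ℝ} (hη0 : 0 < η) (hη : η ≤ μ.real univ) {ι : Type*} (L : Finset ι) {Z : ι → Set Ω}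
    (hZ : ∀ j ∈ L, Z j ∈ 𝒮 ∧ (Z j)ᶜ ∈ 𝒮) {A : Set Ω} (hA : ∀ j ∈ L, A ⊆ Z j) :
    ∃ P, IsThickPartition μ 𝒮 η P ∧ ∃ D ∈ P, A ⊆ D ∧
      ∀ j ∈ L, μ.real (D \ Z j) < η ∨ μ.real (D ∩ Z j) < η := by
  classical
  induction L using Finset.induction_on with
  | empty => exact ⟨{univ}, .singleton_univ huniv hη, univ, Finset.mem_singleton_self _,
      subset_univ A, by simp⟩
  | insert j L hj ih =>
    simp only [Finset.forall_mem_insert] at hZ hA ⊢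
    obtain ⟨P, hP, D, hDP, hAD, hD⟩ := ih hZ.2 hA.2
    by_cases hsplit : η ≤ μ.real (D ∩ Z j) ∧ η ≤ μ.real (D \ Z j)
    · obtain ⟨P', hP', hDZ⟩ := hP.exists_split hDP (h𝒮 _ (hP.mem D hDP) _ hZ.1.1)
        (h𝒮 _ (hP.mem D hDP) _ hZ.1.2) hsplit.1 hsplit.2
      refine ⟨P', hP', D ∩ Z j, hDZ, subset_inter hAD hA.1, Or.inl ?_, fun k hk => ?_⟩
      · rwa [sdiff_eq_empty.2 inter_subset_right, measureReal_empty]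
      · rcases hD k hk with h | h
        · exact Or.inl ((measureReal_mono (sdiff_subset_sdiff_left inter_subset_left)).trans_lt h)
        · exact Or.inr ((measureReal_mono (inter_subset_inter_left _ inter_subset_left)).trans_lt h)
    · refine ⟨P, hP, D, hDP, hAD, ?_, hD⟩
      rw [not_and_or, not_le, not_le] at hsplit
      exact hsplit.symm

theorem measureReal_le_measureReal_biInter_add_sum {Ω : Type*} [MeasurableSpace Ω]
    {μ : Measure Ω} [IsFiniteMeasure μ] {ι : Type*} (L : Finset ι) (Z : ι → Set Ω) (D : Set Ω) :
    μ.real D ≤ μ.real (⋂ j ∈ L, Z j) + ∑ j ∈ L, μ.real (D \ Z j) := by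
  have hD : D ⊆ (⋂ j ∈ L, Z j) ∪ ⋃ j ∈ L, D \ Z j := fun x hx => by
    by_cases h : x ∈ ⋂ j ∈ L, Z j
    · exact Or.inl h
    · simp only [mem_iInter, not_forall] at h
      obtain ⟨j, hj, hxj⟩ := h
      exact Or.inr (mem_biUnion hj ⟨hx, hxj⟩)
  exact (measureReal_mono hD).trans <|
    (measureReal_union_le _ _).trans (add_le_add le_rfl (measureReal_biUnion_finset_le _ _))

theorem exists_measureReal_inter_preimage_eval_mem_Icc {ι : Type*} [Fintype ι] {X : ι → Type*}
    [∀ i, MeasurableSpace (X i)] {μ : ∀ i, Measure (X i)} [∀ i, IsProbabilityMeasure (μ i)]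
    {η : ℝ} (i : ι) (hη : 0 < η) (hat : AtomsLE (μ i) η) {S : Set (∀ i, X i)} {t : ℝ}
    (ht0 : 0 ≤ t) (ht : t ≤ (Measure.pi μ).real S) :
    ∃ U : Set (X i), MeasurableSet U ∧ t ≤ (Measure.pi μ).real (S ∩ Function.eval i ⁻¹' U) ∧
      (Measure.pi μ).real (S ∩ Function.eval i ⁻¹' U) ≤ t + η := by
  set ρ := ((Measure.pi μ).restrict S).map (Function.eval i)
  have hρ : ∀ U, MeasurableSet U → ρ U = Measure.pi μ (S ∩ Function.eval i ⁻¹' U) := by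
    intro U hU
    rw [Measure.map_apply (measurable_pi_apply i) hU,
      Measure.restrict_apply (measurable_pi_apply i hU), inter_comm]
  have hle : ρ ≤ μ i := (Measure.map_mono Measure.restrict_le_self (measurable_pi_apply i)).trans_eq
    (measurePreserving_eval μ i).map_eq
  have := isFiniteMeasure_of_le _ hle
  obtain ⟨U, hU, hlo, hhi⟩ := (hat.mono hle).exists_measure_mem_Icc hη (t := ENNReal.ofReal t)
    (by rwa [hρ _ .univ, preimage_univ, inter_univ,
      ENNReal.ofReal_le_iff_le_toReal (measure_ne_top _ _)])
  rw [hρ U hU] at hlo hhi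
  rw [← ENNReal.ofReal_add ht0 hη.le] at hhi
  exact ⟨U, hU, (ENNReal.ofReal_le_iff_le_toReal (measure_ne_top _ _)).1 hlo,
    ENNReal.toReal_le_of_le_ofReal (by positivity) hhi⟩

section Hypergraph

variable {n : ℕ} {X : Fin n → Type*} [∀ i, MeasurableSpace (X i)]

lemma mem_bdry {e e' : Finset (Fin n)} : e' ∈ bdry e ↔ e' ⊆ e ∧ e'.card + 1 = e.card := by
  simp [bdry]

lemma card_bdry_le (e : Finset (Fin n)) : (bdry e).card ≤ e.card := by
  classical
  calc (bdry e).card ≤ (e.powersetCard 1).card := by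
        refine Finset.card_le_card_of_injOn (e \ ·) (fun e' he' => ?_) fun a ha b hb hab => ?_
        · obtain ⟨he'e, hcard⟩ := mem_bdry.1 he'
          rw [Finset.mem_coe, Finset.mem_powersetCard, Finset.card_sdiff_of_subset he'e]
          exact ⟨Finset.sdiff_subset, by omega⟩
        · rw [← Finset.sdiff_sdiff_eq_self (mem_bdry.1 ha).1,
            ← Finset.sdiff_sdiff_eq_self (mem_bdry.1 hb).1]
          exact congrArg (e \ ·) hab
    _ = e.card := by simp

lemma nonempty_of_mem_bdry {e e' : Finset (Fin n)} (he' : e' ∈ bdry e) (he : 2 ≤ e.card) :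
    e'.Nonempty :=
  Finset.card_pos.1 (by have := (mem_bdry.1 he').2; omega)

lemma cubeSet_univ (e : Finset (Fin n)) : CubeSet e (univ : Set (∀ i, X i)) :=
  ⟨.univ, fun _ _ _ => Iff.rfl⟩

lemma cubeSet_preimage_eval {e : Finset (Fin n)} {i : Fin n} (hi : i ∈ e) {U : Set (X i)}
    (hU : MeasurableSet U) : CubeSet e (Function.eval i ⁻¹' U) :=
  ⟨measurable_pi_apply i hU, fun x y hxy => by rw [mem_preimage, mem_preimage, Function.eval,
    Function.eval, hxy i hi]⟩

namespace CubeSet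

variable {e : Finset (Fin n)} {A B : Set (∀ i, X i)}

lemma compl (hA : CubeSet e A) : CubeSet e Aᶜ :=
  ⟨hA.1.compl, fun x y hxy => not_congr (hA.2 x y hxy)⟩

lemma union (hA : CubeSet e A) (hB : CubeSet e B) : CubeSet e (A ∪ B) :=
  ⟨hA.1.union hB.1, fun x y hxy => or_congr (hA.2 x y hxy) (hB.2 x y hxy)⟩

lemma inter (hA : CubeSet e A) (hB : CubeSet e B) : CubeSet e (A ∩ B) :=
  ⟨hA.1.inter hB.1, fun x y hxy => and_congr (hA.2 x y hxy) (hB.2 x y hxy)⟩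

lemma sPartial {e₀ : Finset (Fin n)} (he : e ∈ bdry e₀) (hA : CubeSet e A) : SPartial e₀ A := by
  classical
  refine ⟨fun e' => if e' = e then A else univ, fun e' _ => ?_, ?_⟩
  · dsimp only
    split_ifs with h
    exacts [h ▸ hA, cubeSet_univ e']
  · refine Subset.antisymm (fun x hx => mem_iInter₂.2 fun e' _ => ?_) ?_
    · dsimp only
      split_ifs
      exacts [hx, mem_univ x]
    · exact (biInter_subset_of_mem he).trans (by simp)

end CubeSet

namespace SPartial

variable {e : Finset (Fin n)} {A B : Set (∀ i, X i)}

lemma measurableSet (hA : SPartial e A) : MeasurableSet A := by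
  obtain ⟨F, hF, rfl⟩ := hA
  exact .biInter (Finset.countable_toSet _) fun e' he' => (hF e' he').1

lemma inter (hA : SPartial e A) (hB : SPartial e B) : SPartial e (A ∩ B) := by
  obtain ⟨F, hF, rfl⟩ := hA
  obtain ⟨G, hG, rfl⟩ := hB
  refine ⟨fun e' => F e' ∩ G e', fun e' he' => (hF e' he').inter (hG e' he'), ?_⟩
  ext x
  simp only [mem_inter_iff, mem_iInter, forall_and]

end SPartial

lemma sPartial_univ (e : Finset (Fin n)) : SPartial e (univ : Set (∀ i, X i)) :=
  ⟨fun _ => univ, fun e' _ => cubeSet_univ e', by simp⟩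

end Hypergraph

section ThickPartition

variable {n : ℕ} {X : Fin n → Type*} [∀ i, MeasurableSpace (X i)] {μ : ∀ i, Measure (X i)}
  [∀ i, IsProbabilityMeasure (μ i)] {η : ℝ} {e : Finset (Fin n)}

theorem IsThickPartition.exists_cell_superset_measureReal_lt (hη : 0 < η)
    (hat : ∀ i, AtomsLE (μ i) η) {P : Finset (Set (∀ i, X i))}
    (hP : IsThickPartition (Measure.pi μ) {s | SPartial e s} η P) {D : Set (∀ i, X i)}
    (hD : D ∈ P) {e' : Finset (Fin n)} (he' : e' ∈ bdry e) (he'ne : e'.Nonempty)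
    {F : Set (∀ i, X i)} (hF : CubeSet e' F) (hDF : (Measure.pi μ).real (D ∩ F) < η)
    (hD4 : 4 * η ≤ (Measure.pi μ).real D) :
    ∃ P', IsThickPartition (Measure.pi μ) {s | SPartial e s} η P' ∧
      ∃ B ∈ P', D ∩ F ⊆ B ∧ (Measure.pi μ).real B < 3 * η := by
  obtain ⟨i, hi⟩ := he'ne
  have hDS : SPartial e D := hP.mem D hD
  have hDF' : (Measure.pi μ).real (D ∩ F) + (Measure.pi μ).real (D \ F) = (Measure.pi μ).real D :=
    measureReal_inter_add_sdiff hF.1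
  obtain ⟨U, hU, hUlo, hUhi⟩ := exists_measureReal_inter_preimage_eval_mem_Icc i hη (hat i)
    (S := D \ F) hη.le (by linarith)
  set Z := F ∪ Function.eval i ⁻¹' U
  have hZ : CubeSet e' Z := hF.union (cubeSet_preimage_eval hi hU)
  have hDZ : (Measure.pi μ).real (D ∩ Z) =
      (Measure.pi μ).real (D ∩ F) + (Measure.pi μ).real (D \ F ∩ Function.eval i ⁻¹' U) := by
    have hsplit : D ∩ Z = D ∩ F ∪ (D \ F ∩ Function.eval i ⁻¹' U) := by
      ext x
      simp only [Z, mem_inter_iff, mem_union, mem_sdiff]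
      tauto
    rw [hsplit, measureReal_union (disjoint_sdiff_right.mono inter_subset_right inter_subset_left)
      ((hDS.measurableSet.diff hF.1).inter (measurable_pi_apply i hU))]
  have hDZ' : (Measure.pi μ).real (D ∩ Z) + (Measure.pi μ).real (D \ Z) = (Measure.pi μ).real D :=
    measureReal_inter_add_sdiff hZ.1
  obtain ⟨P', hP', hDZP'⟩ := hP.exists_split hD (hDS.inter (hZ.sPartial he'))
    (by rw [mem_ofPred_eq, Set.sdiff_eq]; exact hDS.inter (hZ.compl.sPartial he'))
    (by linarith [measureReal_nonneg (μ := Measure.pi μ) (s := D ∩ F)])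
    (by linarith)
  exact ⟨P', hP', D ∩ Z, hDZP', inter_subset_inter_right D subset_union_left, by linarith⟩

theorem exists_isThickPartition_cell_le (hη0 : 0 < η) (hη1 : η ≤ 1) (hat : ∀ i, AtomsLE (μ i) η)
    (he : 2 ≤ e.card) {A : Set (∀ i, X i)} (hA : SPartial e A) :
    ∃ P, IsThickPartition (Measure.pi μ) {s | SPartial e s} η P ∧ ∃ B ∈ P, A ⊆ B ∧
      (Measure.pi μ).real B ≤ (Measure.pi μ).real A + (e.card + 3) * η := by
  obtain ⟨F, hF, rfl⟩ := hA
  obtain ⟨P, hP, D, hDP, hAD, hD⟩ := exists_isThickPartition_unsplittable_cell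
    (μ := Measure.pi μ) (𝒮 := {s | SPartial e s}) (fun _ hs _ ht => SPartial.inter hs ht)
    (sPartial_univ e) hη0 (by simpa using hη1) (bdry e) (Z := F)
    (fun e' he' => ⟨(hF e' he').sPartial he', (hF e' he').compl.sPartial he'⟩)
    (fun _ he' => biInter_subset_of_mem he')
  set A := ⋂ e' ∈ bdry e, F e'
  by_cases hDA : (Measure.pi μ).real D ≤ (Measure.pi μ).real A + (e.card + 3) * η
  · exact ⟨P, hP, D, hDP, hAD, hDA⟩
  obtain ⟨e', he', hDF⟩ : ∃ e' ∈ bdry e, (Measure.pi μ).real (D ∩ F e') < η := by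
    by_contra! hbig
    have hsum : ∑ e' ∈ bdry e, (Measure.pi μ).real (D \ F e') ≤ e.card * η := by
      refine (Finset.sum_le_card_nsmul _ _ η fun e' he' =>
        ((hD e' he').resolve_right (hbig e' he').not_gt).le).trans ?_
      rw [nsmul_eq_mul]
      gcongr
      exact_mod_cast card_bdry_le e
    linarith [measureReal_le_measureReal_biInter_add_sum (μ := Measure.pi μ) (bdry e) F D]
  have hcard : (2 : ℝ) ≤ e.card := by exact_mod_cast he
  obtain ⟨P', hP', B, hBP', hDFB, hB⟩ := hP.exists_cell_superset_measureReal_lt hη0 hat hDP he'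
    (nonempty_of_mem_bdry he' he) (hF e' he') hDF
    (by nlinarith [measureReal_nonneg (μ := Measure.pi μ) (s := A)])
  exact ⟨P', hP', B, hBP', (subset_inter hAD (biInter_subset_of_mem he')).trans hDFB,
    by nlinarith [measureReal_nonneg (μ := Measure.pi μ) (s := A)]⟩

end ThickPartition

theorem stmt5_general {n r : ℕ} (hr : 2 ≤ r)
    {X : Fin n → Type*} [∀ i, MeasurableSpace (X i)]
    (μ : ∀ i, Measure (X i)) [∀ i, IsProbabilityMeasure (μ i)]
    (η : ℝ) (hη0 : 0 < η) (hη1 : η ≤ 1 / (r + 1))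
    (C : ℝ) (hC : 0 < C) (p : ℝ≥0∞)
    (q : ℝ) (hpq : 1 / p + 1 / ENNReal.ofReal q = 1)
    (hnonatomic : ∀ i, AtomsLE (μ i) η)
    (e : Finset (Fin n)) (hecard : e.card = r)
    (f : (∀ i, X i) → ℝ) (hf0 : 0 ≤ f)
    (hfint : Integrable f (Measure.pi μ))
    (hreg : LpRegular (Measure.pi μ) e C η p f) :
    ∀ A : Set (∀ i, X i), SPartial e A →
      (∫ x in A, f x ∂(Measure.pi μ)) ^ q
        ≤ C ^ q * (((Measure.pi μ) A).toReal + (r + 3) * η) := by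
  intro A hA
  subst hecard
  have hη1' : η ≤ 1 := hη1.trans (div_le_one_of_le₀ (by linarith) (by positivity))
  obtain ⟨P, hP, B, hBP, hAB, hB⟩ := exists_isThickPartition_cell_le hη0 hη1' hnonatomic hr hA
  calc (∫ x in A, f x ∂(Measure.pi μ)) ^ q ≤ C ^ q * (Measure.pi μ).real B :=
        rpow_setIntegral_le_of_eLpNorm_partCE_le hf0 hfint hBP (hP.mem B hBP).measurableSet
          (hP.measure_ne_zero hη0 hBP) hAB hpq hC.le
          (hreg P hP.mem hP.pairwiseDisjoint hP.sUnion_eq_univ hP.le_measureReal)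
    _ ≤ C ^ q * (((Measure.pi μ) A).toReal + (e.card + 3) * η) := by
        gcongr
        exact hB

/-- **Proposition 4.1(a): a Hölder-type inequality for `L_p` regular functions.**
If `f` is `(C, η, p)`-regular, then `(∫_A f dμ)^q ≤ C^q (μ(A) + (r+3)η)` for every
`A ∈ S_{∂e}`, where `q` is the conjugate exponent of `p`. -/
theorem stmt5 {n r : ℕ} (hnr : r ≤ n) (hr : 2 ≤ r)
    {X : Fin n → Type*} [∀ i, MeasurableSpace (X i)]
    (μ : ∀ i, Measure (X i)) [∀ i, IsProbabilityMeasure (μ i)]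
    (η : ℝ) (hη0 : 0 < η) (hη1 : η ≤ 1 / (r + 1))
    (C : ℝ) (hC : 0 < C) (p : ℝ≥0∞) (hp : 1 < p)
    (q : ℝ) (hq : 1 ≤ q) (hpq : 1 / p + 1 / ENNReal.ofReal q = 1)
    (hnonatomic : ∀ i, AtomsLE (μ i) η)
    (𝓗 : Finset (Finset (Fin n))) (e : Finset (Fin n)) (he : e ∈ 𝓗) (hecard : e.card = r)
    (f : (∀ i, X i) → ℝ) (hf0 : 0 ≤ f) (hfmeas : Measurable f) (hfdep : DependsOnF e f)
    (hfint : Integrable f (Measure.pi μ))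
    (hreg : LpRegular (Measure.pi μ) e C η p f) :
    ∀ A : Set (∀ i, X i), SPartial e A →
      (∫ x in A, f x ∂(Measure.pi μ)) ^ q
        ≤ C ^ q * (((Measure.pi μ) A).toReal + (r + 3) * η) :=
  stmt5_general hr μ η hη0 hη1 C hC p q hpq hnonatomic e hecard f hf0 hfint hreg
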